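/- (Converse of the distributed task-encoding theorem, general sources.) Fix ρ > 0 and set ρ̃ = 1/(1+ρ). For each n, let P_{X^n Y^n} be a joint PMF on X^n × Y^n (where X and Y are finite sets), with marginals P_{X^n} and P_{Y^n}. Let R_X, R_Y ≥ 0, and suppose there exists a sequence of pairs of functions f_n : X^n → {1,…,⌊2^{n·R_X}⌋}, g_n : Y^n → {1,…,⌊2^{n·R_Y}⌋} such that E[L(X^n,Y^n)^ρ] → 1 as n → ∞, where L(x^n,y^n) = |{(x',y') ∈ X^n × Y^n : f_n(x') = f_n(x^n) ∧ g_n(y') = g_n(y^n)}|. Then R_X ≥ limsup_{n→∞} H_{ρ̃}(P_{X^n})/n, R_Y ≥ limsup_{n→∞} H_{ρ̃}(P_{Y^n})/n, and R_X + R_Y ≥ limsup_{n→∞} [H_{ρ̃}(P_{X^n Y^n}) + K_{ρ̃}(X^n;Y^n)]/n. -/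

import Mathlib

/-!
Put `α = 1/(1+ρ)`. Hölder's inequality gives `Δ_α(P‖Q) ≥ 0` for every positive `Q`, and for
`Q = L^{-(1+ρ)}` one has exactly `H_α(P) + Δ_α(P‖Q) = ρ⁻¹ log E[L^ρ] + log Σ 1/L`. Take for `L` the
list size of an encoder: `Σ 1/L` counts the descriptions actually used, so it is at most
`2^{nR}`, while `ρ⁻¹ log E[L^ρ] → 0`. For the sum rate, the joint list size factors as
`L_X(x) L_Y(y)`, so `L^{-(1+ρ)}` is proportional to a product distribution and `K_α ≤ Δ_α` brings
in the dependence term.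
-/

open Filter

/-- `P` is a probability mass function on the finite type `X`. -/
def IsPMF {X : Type*} [Fintype X] (P : X → ℝ) : Prop :=
  (∀ x, 0 ≤ P x) ∧ ∑ x, P x = 1

/-- Rényi entropy of order `α` (base-2 logarithm). -/
noncomputable def renyiEntropy {X : Type*} [Fintype X] (α : ℝ) (P : X → ℝ) : ℝ :=
  (1 - α)⁻¹ * Real.logb 2 (∑ x, P x ^ α)

/-- Relative `α`-entropy `Δ_α(P‖Q)` (base-2 logarithm). -/
noncomputable def relAlphaEntropy {X : Type*} [Fintype X] (α : ℝ) (P Q : X → ℝ) : ℝ :=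
  (α / (1 - α)) * Real.logb 2 (∑ x, P x * Q x ^ (α - 1))
    + Real.logb 2 (∑ x, Q x ^ α)
    - (1 - α)⁻¹ * Real.logb 2 (∑ x, P x ^ α)

/-- The dependence measure `K_α(X;Y)`: the minimum of `Δ_α(P_{XY}‖Q_X Q_Y)` over all PMFs
`Q_X` and `Q_Y`.  (Restricting to everywhere-positive `Q_X`, `Q_Y` gives the same value,
since by the convention `p/0 = ∞` any `Q` vanishing on the support of `P` yields an
infinite relative entropy, and `Δ_α` is continuous in positive `Q`.) -/
noncomputable def Kdep {X Y : Type*} [Fintype X] [Fintype Y] (α : ℝ) (P : X × Y → ℝ) : ℝ :=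
  sInf {r : ℝ | ∃ QX : X → ℝ, ∃ QY : Y → ℝ, IsPMF QX ∧ IsPMF QY ∧
    (∀ x, 0 < QX x) ∧ (∀ y, 0 < QY y) ∧
    r = relAlphaEntropy α P (fun p => QX p.1 * QY p.2)}

/-- The joint list size of `(xs,ys)` under the encoders `f` and `g`. -/
noncomputable def jointListSize {X Y : Type*} [Fintype X] [Fintype Y] {MX MY : ℕ}
    (f : X → Fin MX) (g : Y → Fin MY) (x : X) (y : Y) : ℕ :=
  (Finset.univ.filter (fun p : X × Y => f p.1 = f x ∧ g p.2 = g y)).card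

open Finset Real

section PMF

variable {Z : Type*} [Fintype Z]

lemma IsPMF.nonempty {P : Z → ℝ} (hP : IsPMF P) : Nonempty Z := by
  by_contra h
  rw [not_nonempty_iff] at h
  simpa using hP.2

lemma IsPMF.exists_pos {P : Z → ℝ} (hP : IsPMF P) : ∃ z, 0 < P z := by
  by_contra! h
  have : ∑ z, P z = 0 := sum_eq_zero fun z _ => le_antisymm (h z) (hP.1 z)
  simp [hP.2] at this

lemma IsPMF.sum_mul_pos {P : Z → ℝ} (hP : IsPMF P) {w : Z → ℝ} (hw : ∀ z, 0 < w z) :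
    0 < ∑ z, P z * w z :=
  have ⟨z₀, hz₀⟩ := hP.exists_pos
  sum_pos' (fun z _ => mul_nonneg (hP.1 z) (hw z).le) ⟨z₀, mem_univ _, mul_pos hz₀ (hw z₀)⟩

lemma IsPMF.sum_rpow_pos {P : Z → ℝ} (hP : IsPMF P) (α : ℝ) : 0 < ∑ z, P z ^ α :=
  have ⟨z₀, hz₀⟩ := hP.exists_pos
  sum_pos' (fun z _ => rpow_nonneg (hP.1 z) α) ⟨z₀, mem_univ _, rpow_pos_of_pos hz₀ α⟩

lemma isPMF_inv_sum_mul [Nonempty Z] {w : Z → ℝ} (hw : ∀ z, 0 < w z) :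
    IsPMF fun z => (∑ z', w z')⁻¹ * w z := by
  have hsum : 0 < ∑ z, w z := sum_pos (fun z _ => hw z) univ_nonempty
  refine ⟨fun z => mul_nonneg (inv_nonneg.2 hsum.le) (hw z).le, ?_⟩
  rw [← mul_sum, inv_mul_cancel₀ hsum.ne']

variable {X Y : Type*} [Fintype X] [Fintype Y] {P : X × Y → ℝ}

lemma IsPMF.fst (hP : IsPMF P) : IsPMF fun x => ∑ y, P (x, y) :=
  ⟨fun x => sum_nonneg fun y _ => hP.1 _, by rw [← Fintype.sum_prod_type]; exact hP.2⟩

lemma IsPMF.comp_swap (hP : IsPMF P) : IsPMF fun p : Y × X => P p.swap :=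
  ⟨fun p => hP.1 p.swap, (Fintype.sum_equiv (Equiv.prodComm Y X) _ P fun _ => rfl).trans hP.2⟩

end PMF

section Entropy

variable {Z : Type*} [Fintype Z]

/-- Hölder's inequality with exponents `1` and `α / (1 - α)`, applied to
`P = (P Q ^ (α - 1)) * Q ^ (1 - α)`. -/
lemma sum_rpow_le_holder {α : ℝ} (hα0 : 0 < α) (hα1 : α < 1) {P Q : Z → ℝ}
    (hP : ∀ z, 0 ≤ P z) (hQ : ∀ z, 0 < Q z) :
    ∑ z, P z ^ α ≤ (∑ z, P z * Q z ^ (α - 1)) ^ α * (∑ z, Q z ^ α) ^ (1 - α) := by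
  have hpqr : Real.HolderTriple 1 (α / (1 - α)) α :=
    ⟨by field_simp; ring, one_pos, div_pos hα0 (by linarith)⟩
  have hold := Real.Lr_rpow_le_Lp_mul_Lq_of_nonneg univ hpqr
    (f := fun z => P z * Q z ^ (α - 1)) (g := fun z => Q z ^ (1 - α))
    (fun z _ => mul_nonneg (hP z) (rpow_nonneg (hQ z).le _))
    (fun z _ => rpow_nonneg (hQ z).le _)
  have hprod : ∀ z, P z * Q z ^ (α - 1) * Q z ^ (1 - α) = P z := fun z => by
    rw [mul_assoc, ← rpow_add (hQ z), sub_add_sub_cancel', sub_self, rpow_zero, mul_one]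
  have hpow : ∀ z, (Q z ^ (1 - α)) ^ (α / (1 - α)) = Q z ^ α := fun z => by
    rw [← rpow_mul (hQ z).le, mul_div_cancel₀ _ (by linarith)]
  simpa only [hprod, hpow, rpow_one, div_one, div_div_cancel₀ hα0.ne'] using hold

lemma relAlphaEntropy_nonneg {α : ℝ} (hα0 : 0 < α) (hα1 : α < 1) {P Q : Z → ℝ} (hP : IsPMF P)
    (hQ : ∀ z, 0 < Q z) : 0 ≤ relAlphaEntropy α P Q := by
  have : Nonempty Z := hP.nonempty
  have hA := hP.sum_mul_pos fun z => rpow_pos_of_pos (hQ z) (α - 1)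
  have hB : 0 < ∑ z, Q z ^ α := sum_pos (fun z _ => rpow_pos_of_pos (hQ z) α) univ_nonempty
  have hlog := logb_le_logb_of_le one_lt_two (hP.sum_rpow_pos α)
    (sum_rpow_le_holder hα0 hα1 hP.1 hQ)
  rw [logb_mul (rpow_pos_of_pos hA _).ne' (rpow_pos_of_pos hB _).ne',
    logb_rpow_eq_mul_logb_of_pos hA, logb_rpow_eq_mul_logb_of_pos hB] at hlog
  have h1α : 0 < 1 - α := by linarith
  calc 0 ≤ (1 - α)⁻¹ * (α * logb 2 (∑ z, P z * Q z ^ (α - 1))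
        + (1 - α) * logb 2 (∑ z, Q z ^ α) - logb 2 (∑ z, P z ^ α)) :=
        mul_nonneg (inv_nonneg.2 h1α.le) (sub_nonneg.2 hlog)
    _ = relAlphaEntropy α P Q := by
        rw [relAlphaEntropy]
        field_simp

lemma relAlphaEntropy_const_mul_right {α : ℝ} (hα : α ≠ 1) {P Q : Z → ℝ} (hP : IsPMF P)
    (hQ : ∀ z, 0 < Q z) {c : ℝ} (hc : 0 < c) :
    relAlphaEntropy α P (fun z => c * Q z) = relAlphaEntropy α P Q := by
  have : Nonempty Z := hP.nonempty
  have hA := hP.sum_mul_pos fun z => rpow_pos_of_pos (hQ z) (α - 1)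
  have hB : 0 < ∑ z, Q z ^ α := sum_pos (fun z _ => rpow_pos_of_pos (hQ z) α) univ_nonempty
  have hsplit : ∀ (β : ℝ) z, (c * Q z) ^ β = c ^ β * Q z ^ β := fun β z =>
    mul_rpow hc.le (hQ z).le
  simp only [relAlphaEntropy, hsplit, mul_left_comm (P _), ← mul_sum]
  rw [logb_mul (rpow_pos_of_pos hc _).ne' hA.ne', logb_mul (rpow_pos_of_pos hc _).ne' hB.ne',
    logb_rpow_eq_mul_logb_of_pos hc, logb_rpow_eq_mul_logb_of_pos hc]
  have : 1 - α ≠ 0 := sub_ne_zero.2 (Ne.symm hα)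
  field_simp
  ring

lemma renyiEntropy_nonneg {α : ℝ} (hα : α ≤ 1) {P : Z → ℝ} (hP : IsPMF P) :
    0 ≤ renyiEntropy α P := by
  have hle : ∀ z, P z ≤ P z ^ α := fun z =>
    self_le_rpow_of_le_one (hP.1 z) (hP.2 ▸ single_le_sum (fun w _ => hP.1 w) (mem_univ z)) hα
  have hsum : 1 ≤ ∑ z, P z ^ α := hP.2 ▸ sum_le_sum fun z _ => hle z
  exact mul_nonneg (inv_nonneg.2 (by linarith)) (logb_nonneg one_lt_two hsum)

lemma renyiEntropy_add_relAlphaEntropy_rpow_neg {ρ : ℝ} (hρ : 0 < ρ) (P : Z → ℝ) {L : Z → ℝ}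
    (hL : ∀ z, 0 < L z) :
    renyiEntropy (1 / (1 + ρ)) P + relAlphaEntropy (1 / (1 + ρ)) P (fun z => L z ^ (-(1 + ρ))) =
      ρ⁻¹ * logb 2 (∑ z, P z * L z ^ ρ) + logb 2 (∑ z, (L z)⁻¹) := by
  have h1ρ : 1 + ρ ≠ 0 := by positivity
  have hρ0 : ρ ≠ 0 := hρ.ne'
  have hmoment : ∀ z, (L z ^ (-(1 + ρ))) ^ (1 / (1 + ρ) - 1) = L z ^ ρ := fun z => by
    rw [← rpow_mul (hL z).le]
    congr 1
    field_simp
    ring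
  have hinv : ∀ z, (L z ^ (-(1 + ρ))) ^ (1 / (1 + ρ)) = (L z)⁻¹ := fun z => by
    rw [← rpow_mul (hL z).le, ← rpow_neg_one]
    congr 1
    field_simp
  have hcoeff : 1 / (1 + ρ) / (1 - 1 / (1 + ρ)) = ρ⁻¹ := by
    field_simp
    rw [add_sub_cancel_left, div_self hρ0]
  simp only [renyiEntropy, relAlphaEntropy, hmoment, hinv, hcoeff]
  ring

lemma renyiEntropy_le_logb_moment_add {ρ : ℝ} (hρ : 0 < ρ) {P : Z → ℝ} (hP : IsPMF P) {L : Z → ℝ}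
    (hL : ∀ z, 0 < L z) :
    renyiEntropy (1 / (1 + ρ)) P ≤ ρ⁻¹ * logb 2 (∑ z, P z * L z ^ ρ) + logb 2 (∑ z, (L z)⁻¹) := by
  have hα : 1 / (1 + ρ) < 1 := by rw [div_lt_one (by positivity)]; linarith
  have := relAlphaEntropy_nonneg (by positivity) hα hP fun z => rpow_pos_of_pos (hL z) (-(1 + ρ))
  linarith [renyiEntropy_add_relAlphaEntropy_rpow_neg hρ P hL]

end Entropy

section Kdep

variable {X Y : Type*} [Fintype X] [Fintype Y] {α : ℝ} {P : X × Y → ℝ}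

lemma Kdep_nonneg (hα0 : 0 < α) (hα1 : α < 1) (hP : IsPMF P) : 0 ≤ Kdep α P :=
  Real.sInf_nonneg <| by
    rintro r ⟨QX, QY, -, -, hQX, hQY, rfl⟩
    exact relAlphaEntropy_nonneg hα0 hα1 hP fun p => mul_pos (hQX p.1) (hQY p.2)

lemma Kdep_le_relAlphaEntropy (hα0 : 0 < α) (hα1 : α < 1) (hP : IsPMF P) {QX : X → ℝ}
    {QY : Y → ℝ} (hQX : IsPMF QX) (hQY : IsPMF QY) (hQX_pos : ∀ x, 0 < QX x)
    (hQY_pos : ∀ y, 0 < QY y) :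
    Kdep α P ≤ relAlphaEntropy α P (fun p => QX p.1 * QY p.2) := by
  refine csInf_le ⟨0, ?_⟩ ⟨QX, QY, hQX, hQY, hQX_pos, hQY_pos, rfl⟩
  rintro r ⟨QX', QY', -, -, hQX', hQY', rfl⟩
  exact relAlphaEntropy_nonneg hα0 hα1 hP fun p => mul_pos (hQX' p.1) (hQY' p.2)

/-- Test `K_α` against the normalizations of `LX ^ (-(1+ρ))` and `LY ^ (-(1+ρ))`: their product
is a constant multiple of `(LX LY) ^ (-(1+ρ))`, and `Δ_α` ignores constant factors. -/
lemma renyiEntropy_add_Kdep_le {ρ : ℝ} (hρ : 0 < ρ) (hP : IsPMF P) {LX : X → ℝ} {LY : Y → ℝ}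
    (hLX : ∀ x, 0 < LX x) (hLY : ∀ y, 0 < LY y) :
    renyiEntropy (1 / (1 + ρ)) P + Kdep (1 / (1 + ρ)) P ≤
      ρ⁻¹ * logb 2 (∑ p, P p * (LX p.1 * LY p.2) ^ ρ) +
        (logb 2 (∑ x, (LX x)⁻¹) + logb 2 (∑ y, (LY y)⁻¹)) := by
  have : Nonempty X := hP.fst.nonempty
  have : Nonempty Y := hP.comp_swap.fst.nonempty
  have hα0 : 0 < 1 / (1 + ρ) := by positivity
  have hα1 : 1 / (1 + ρ) < 1 := by rw [div_lt_one (by positivity)]; linarith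
  set wX : X → ℝ := fun x => LX x ^ (-(1 + ρ))
  set wY : Y → ℝ := fun y => LY y ^ (-(1 + ρ))
  have hwX : ∀ x, 0 < wX x := fun x => rpow_pos_of_pos (hLX x) _
  have hwY : ∀ y, 0 < wY y := fun y => rpow_pos_of_pos (hLY y) _
  have hsX : 0 < ∑ x, wX x := sum_pos (fun x _ => hwX x) univ_nonempty
  have hsY : 0 < ∑ y, wY y := sum_pos (fun y _ => hwY y) univ_nonempty
  have hL : ∀ p : X × Y, 0 < LX p.1 * LY p.2 := fun p => mul_pos (hLX p.1) (hLY p.2)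
  have hprod : (fun p : X × Y => (∑ x, wX x)⁻¹ * wX p.1 * ((∑ y, wY y)⁻¹ * wY p.2)) =
      fun p => ((∑ x, wX x)⁻¹ * (∑ y, wY y)⁻¹) * (LX p.1 * LY p.2) ^ (-(1 + ρ)) := by
    funext p
    rw [mul_rpow (hLX p.1).le (hLY p.2).le]
    ring
  have hsum_inv : ∑ p : X × Y, (LX p.1 * LY p.2)⁻¹ = (∑ x, (LX x)⁻¹) * ∑ y, (LY y)⁻¹ := by
    simp only [mul_inv, Fintype.sum_prod_type, Fintype.sum_mul_sum]
  calc renyiEntropy (1 / (1 + ρ)) P + Kdep (1 / (1 + ρ)) P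
      ≤ renyiEntropy (1 / (1 + ρ)) P + relAlphaEntropy (1 / (1 + ρ)) P
          (fun p => (∑ x, wX x)⁻¹ * wX p.1 * ((∑ y, wY y)⁻¹ * wY p.2)) :=
        add_le_add_right (Kdep_le_relAlphaEntropy hα0 hα1 hP (isPMF_inv_sum_mul hwX)
          (isPMF_inv_sum_mul hwY) (fun x => mul_pos (inv_pos.2 hsX) (hwX x))
          (fun y => mul_pos (inv_pos.2 hsY) (hwY y))) _
    _ = renyiEntropy (1 / (1 + ρ)) P + relAlphaEntropy (1 / (1 + ρ)) P
          (fun p => (LX p.1 * LY p.2) ^ (-(1 + ρ))) := by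
        rw [hprod, relAlphaEntropy_const_mul_right hα1.ne hP (fun p => rpow_pos_of_pos (hL p) _)
          (mul_pos (inv_pos.2 hsX) (inv_pos.2 hsY))]
    _ = _ := by
        rw [renyiEntropy_add_relAlphaEntropy_rpow_neg hρ P hL, hsum_inv,
          logb_mul (sum_pos (fun x _ => inv_pos.2 (hLX x)) univ_nonempty).ne'
            (sum_pos (fun y _ => inv_pos.2 (hLY y)) univ_nonempty).ne']

end Kdep

section ListSize

variable {X Y : Type*} [Fintype X] [Fintype Y] {MX MY : ℕ}

def listSize (f : X → Fin MX) (x : X) : ℕ :=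
  #{x' | f x' = f x}

lemma listSize_pos (f : X → Fin MX) (x : X) : 0 < listSize f x :=
  card_pos.2 ⟨x, mem_filter.2 ⟨mem_univ _, rfl⟩⟩

/-- Each nonempty fibre of `f` contributes exactly `1` to the sum. -/
lemma sum_inv_listSize_le (f : X → Fin MX) : ∑ x, (listSize f x : ℝ)⁻¹ ≤ MX :=
  calc ∑ x, (listSize f x : ℝ)⁻¹
      = ∑ j : Fin MX, ∑ x with f x = j, (#{x' | f x' = j} : ℝ)⁻¹ := by
        rw [← sum_fiberwise_of_maps_to (g := f) fun x _ => mem_univ (f x)]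
        refine sum_congr rfl fun j _ => sum_congr rfl fun x hx => ?_
        rw [listSize, (mem_filter.1 hx).2]
    _ = ∑ j : Fin MX, (#{x | f x = j} : ℝ) * (#{x' | f x' = j} : ℝ)⁻¹ := by
        simp only [sum_const, nsmul_eq_mul]
    _ ≤ ∑ _j : Fin MX, (1 : ℝ) := sum_le_sum fun j _ => mul_inv_le_one
    _ = MX := by simp

lemma logb_sum_inv_listSize_le [Nonempty X] (f : X → Fin MX) {t : ℝ} (hM : (MX : ℝ) ≤ 2 ^ t) :
    logb 2 (∑ x, (listSize f x : ℝ)⁻¹) ≤ t :=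
  (logb_le_iff_le_rpow one_lt_two
    (sum_pos (fun x _ => by simpa using listSize_pos f x) univ_nonempty)).2
    ((sum_inv_listSize_le f).trans hM)

lemma jointListSize_eq_mul (f : X → Fin MX) (g : Y → Fin MY) (x : X) (y : Y) :
    jointListSize f g x y = listSize f x * listSize g y := by
  rw [jointListSize, ← univ_product_univ,
    filter_product (fun x' => f x' = f x) (fun y' => g y' = g y), card_product, listSize,
    listSize]

noncomputable def listSizeMoment (ρ : ℝ) (P : X × Y → ℝ) (f : X → Fin MX) (g : Y → Fin MY) : ℝ :=
  ∑ p, P p * (jointListSize f g p.1 p.2 : ℝ) ^ ρ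

variable {ρ : ℝ} {P : X × Y → ℝ}

lemma listSizeMoment_swap (f : X → Fin MX) (g : Y → Fin MY) :
    listSizeMoment ρ (fun p => P p.swap) g f = listSizeMoment ρ P f g :=
  Fintype.sum_equiv (Equiv.prodComm Y X) _ _ fun p => by
    simp only [Equiv.prodComm_apply, Prod.fst_swap, Prod.snd_swap, jointListSize_eq_mul,
      Nat.mul_comm]

lemma sum_fst_mul_rpow_listSize_le (hρ : 0 ≤ ρ) (hP : ∀ p, 0 ≤ P p) (f : X → Fin MX)
    (g : Y → Fin MY) :
    ∑ x, (∑ y, P (x, y)) * (listSize f x : ℝ) ^ ρ ≤ listSizeMoment ρ P f g := by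
  rw [listSizeMoment, Fintype.sum_prod_type]
  refine sum_le_sum fun x _ => ?_
  rw [sum_mul]
  refine sum_le_sum fun y _ => mul_le_mul_of_nonneg_left ?_ (hP _)
  rw [jointListSize_eq_mul, Nat.cast_mul]
  exact rpow_le_rpow (Nat.cast_nonneg _)
    (le_mul_of_one_le_right (Nat.cast_nonneg _) (Nat.one_le_cast.2 (listSize_pos g y))) hρ

lemma renyiEntropy_fst_le (hρ : 0 < ρ) (hP : IsPMF P) (f : X → Fin MX) (g : Y → Fin MY) {t : ℝ}
    (hM : (MX : ℝ) ≤ 2 ^ t) :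
    renyiEntropy (1 / (1 + ρ)) (fun x => ∑ y, P (x, y)) ≤
      t + ρ⁻¹ * logb 2 (listSizeMoment ρ P f g) := by
  have : Nonempty X := hP.fst.nonempty
  have hL : ∀ x, (0 : ℝ) < listSize f x := fun x => Nat.cast_pos.2 (listSize_pos f x)
  have hmoment := logb_le_logb_of_le one_lt_two
    (hP.fst.sum_mul_pos fun x => rpow_pos_of_pos (hL x) ρ)
    (sum_fst_mul_rpow_listSize_le hρ.le hP.1 f g)
  linarith [renyiEntropy_le_logb_moment_add hρ hP.fst hL, logb_sum_inv_listSize_le f hM,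
    mul_le_mul_of_nonneg_left hmoment (inv_nonneg.2 hρ.le)]

lemma renyiEntropy_snd_le (hρ : 0 < ρ) (hP : IsPMF P) (f : X → Fin MX) (g : Y → Fin MY) {t : ℝ}
    (hM : (MY : ℝ) ≤ 2 ^ t) :
    renyiEntropy (1 / (1 + ρ)) (fun y => ∑ x, P (x, y)) ≤
      t + ρ⁻¹ * logb 2 (listSizeMoment ρ P f g) := by
  have := renyiEntropy_fst_le hρ hP.comp_swap g f hM
  rwa [listSizeMoment_swap] at this

lemma renyiEntropy_add_Kdep_le_listSizeMoment (hρ : 0 < ρ) (hP : IsPMF P) (f : X → Fin MX)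
    (g : Y → Fin MY) {s t : ℝ} (hMX : (MX : ℝ) ≤ 2 ^ s) (hMY : (MY : ℝ) ≤ 2 ^ t) :
    renyiEntropy (1 / (1 + ρ)) P + Kdep (1 / (1 + ρ)) P ≤
      (s + t) + ρ⁻¹ * logb 2 (listSizeMoment ρ P f g) := by
  have : Nonempty X := hP.fst.nonempty
  have : Nonempty Y := hP.comp_swap.fst.nonempty
  have hbound := renyiEntropy_add_Kdep_le hρ hP (fun x => Nat.cast_pos.2 (listSize_pos f x))
    (fun y => Nat.cast_pos.2 (listSize_pos g y))
  simp only [← Nat.cast_mul, ← jointListSize_eq_mul] at hbound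
  unfold listSizeMoment
  linarith [logb_sum_inv_listSize_le f hMX, logb_sum_inv_listSize_le g hMY]

end ListSize

lemma limsup_div_natCast_le {H c : ℕ → ℝ} {R : ℝ} (hH : ∀ n, 0 ≤ H n)
    (hc : Tendsto c atTop (nhds 0)) (hle : ∀ n, H n ≤ n * R + c n) :
    limsup (fun n => H n / n) atTop ≤ R := by
  have hlim : Tendsto (fun n : ℕ => R + c n / n) atTop (nhds R) := by
    simpa using tendsto_const_nhds.add (hc.div_atTop tendsto_natCast_atTop_atTop)
  have hev : ∀ᶠ n : ℕ in atTop, H n / n ≤ R + c n / n := by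
    filter_upwards [eventually_gt_atTop 0] with n hn
    have hn' : (0 : ℝ) < n := Nat.cast_pos.2 hn
    rw [div_le_iff₀ hn', add_mul, div_mul_cancel₀ _ hn'.ne']
    linarith [hle n]
  calc limsup (fun n => H n / n) atTop
      ≤ limsup (fun n : ℕ => R + c n / n) atTop :=
        limsup_le_limsup hev
          (isCoboundedUnder_le_of_le atTop fun n => div_nonneg (hH n) n.cast_nonneg)
          hlim.isBoundedUnder_le
    _ = R := hlim.limsup_eq

theorem distributed_task_encoding_converse_general_general
    {X Y : Type*} [Fintype X] [Fintype Y]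
    (ρ : ℝ) (hρ : 0 < ρ)
    (P : ∀ n : ℕ, (Fin n → X) × (Fin n → Y) → ℝ) (hP : ∀ n, IsPMF (P n))
    (RX RY : ℝ)
    (F : ∀ n : ℕ, (Fin n → X) → Fin ⌊(2 : ℝ) ^ ((n : ℝ) * RX)⌋₊)
    (G : ∀ n : ℕ, (Fin n → Y) → Fin ⌊(2 : ℝ) ^ ((n : ℝ) * RY)⌋₊)
    (hconv : Tendsto
      (fun n : ℕ => ∑ p : (Fin n → X) × (Fin n → Y),
        P n p * (jointListSize (F n) (G n) p.1 p.2 : ℝ) ^ ρ)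
      atTop (nhds 1)) :
    RX ≥ limsup (fun n : ℕ =>
        renyiEntropy (1 / (1 + ρ)) (fun xs : Fin n → X => ∑ ys : Fin n → Y, P n (xs, ys))
          / (n : ℝ)) atTop ∧
    RY ≥ limsup (fun n : ℕ =>
        renyiEntropy (1 / (1 + ρ)) (fun ys : Fin n → Y => ∑ xs : Fin n → X, P n (xs, ys))
          / (n : ℝ)) atTop ∧
    RX + RY ≥ limsup (fun n : ℕ =>
        (renyiEntropy (1 / (1 + ρ)) (P n) + Kdep (1 / (1 + ρ)) (P n)) / (n : ℝ)) atTop := by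
  have hα : 1 / (1 + ρ) < 1 := by rw [div_lt_one (by positivity)]; linarith
  have hc : Tendsto (fun n => ρ⁻¹ * logb 2 (listSizeMoment ρ (P n) (F n) (G n))) atTop
      (nhds 0) := by
    simpa [listSizeMoment] using
      ((continuousAt_logb one_ne_zero).tendsto.comp hconv).const_mul ρ⁻¹
  have hfloor : ∀ t : ℝ, (⌊(2 : ℝ) ^ t⌋₊ : ℝ) ≤ 2 ^ t := fun t => Nat.floor_le (by positivity)
  refine ⟨?_, ?_, ?_⟩
  · exact limsup_div_natCast_le (fun n => renyiEntropy_nonneg hα.le (hP n).fst) hc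
      fun n => renyiEntropy_fst_le hρ (hP n) (F n) (G n) (hfloor _)
  · exact limsup_div_natCast_le (fun n => renyiEntropy_nonneg hα.le (hP n).comp_swap.fst) hc
      fun n => renyiEntropy_snd_le hρ (hP n) (F n) (G n) (hfloor _)
  · refine limsup_div_natCast_le (fun n => add_nonneg (renyiEntropy_nonneg hα.le (hP n))
      (Kdep_nonneg (by positivity) hα (hP n))) hc fun n => ?_
    rw [mul_add]
    exact renyiEntropy_add_Kdep_le_listSizeMoment hρ (hP n) (F n) (G n) (hfloor _) (hfloor _)

/-- converse, general sources: if for each `n` the pair `(X^n, Y^n)` has joint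
PMF `P n` on `X^n × Y^n`, and there are encoders `f_n : X^n → {1,…,⌊2^{nR_X}⌋}` and
`g_n : Y^n → {1,…,⌊2^{nR_Y}⌋}` whose `ρ`-th moment of the joint list size tends to `1`, then
`R_X ≥ limsup H_{ρ̃}(P_{X^n})/n`, `R_Y ≥ limsup H_{ρ̃}(P_{Y^n})/n`, and
`R_X + R_Y ≥ limsup [H_{ρ̃}(P_{X^n Y^n}) + K_{ρ̃}(X^n;Y^n)]/n`, where `ρ̃ = 1/(1+ρ)`. -/
theorem distributed_task_encoding_converse_general
    {X Y : Type*} [Fintype X] [Fintype Y]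
    (ρ : ℝ) (hρ : 0 < ρ)
    (P : ∀ n : ℕ, (Fin n → X) × (Fin n → Y) → ℝ) (hP : ∀ n, IsPMF (P n))
    (RX RY : ℝ) (hRX : 0 ≤ RX) (hRY : 0 ≤ RY)
    (F : ∀ n : ℕ, (Fin n → X) → Fin ⌊(2 : ℝ) ^ ((n : ℝ) * RX)⌋₊)
    (G : ∀ n : ℕ, (Fin n → Y) → Fin ⌊(2 : ℝ) ^ ((n : ℝ) * RY)⌋₊)
    (hconv : Tendsto
      (fun n : ℕ => ∑ p : (Fin n → X) × (Fin n → Y),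
        P n p * (jointListSize (F n) (G n) p.1 p.2 : ℝ) ^ ρ)
      atTop (nhds 1)) :
    RX ≥ limsup (fun n : ℕ =>
        renyiEntropy (1 / (1 + ρ)) (fun xs : Fin n → X => ∑ ys : Fin n → Y, P n (xs, ys))
          / (n : ℝ)) atTop ∧
    RY ≥ limsup (fun n : ℕ =>
        renyiEntropy (1 / (1 + ρ)) (fun ys : Fin n → Y => ∑ xs : Fin n → X, P n (xs, ys))
          / (n : ℝ)) atTop ∧
    RX + RY ≥ limsup (fun n : ℕ =>
        (renyiEntropy (1 / (1 + ρ)) (P n) + Kdep (1 / (1 + ρ)) (P n)) / (n : ℝ)) atTop :=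
  distributed_task_encoding_converse_general_general ρ hρ P hP RX RY F G hconv
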